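/- arXiv:2510.17596 — 2 statements merged into one kernel-verified Lean document; each statement's English description precedes it below -/
import Mathlib

section
/- Given a covering array A = CA(N;t,k,v) with t ≥ 2 and k ≥ t, and any fixed symbol σ, the subarray of A consisting of the first k-1 columns of those rows whose last entry is σ is a covering array of strength t-1 on k-1 columns, and it has at most N - (v-1)·CAN(t-1,k-1,v) rows. -/
open Finset Function

/-- `A` (with row index type `R`, `k` columns, `v`-ary alphabet) is a covering array of
strength `t`: every selection of `t` distinct columns realizes every `t`-tuple in some row. -/
def IsCA (R : Type) (t k v : ℕ) (A : R → Fin k → Fin v) : Prop :=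
  ∀ cols : Fin t → Fin k, Function.Injective cols →
    ∀ f : Fin t → Fin v, ∃ r : R, ∀ i : Fin t, A r (cols i) = f i

/-- The covering array number: least `N` such that a `CA(N; t, k, v)` exists. -/
noncomputable def CAN (t k v : ℕ) : ℕ :=
  sInf {N | ∃ A : Fin N → Fin k → Fin v, IsCA (Fin N) t k v A}

/-- The maximal number of columns `k` such that a `CA(N; t, k, v)` exists. -/
noncomputable def CAK (N t v : ℕ) : ℕ :=
  sSup {k | ∃ A : Fin N → Fin k → Fin v, IsCA (Fin N) t k v A}

/-- Number of rows of `A` in which the columns `cols` carry the tuple `f`. -/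
def tupleCount {N k v i : ℕ} (A : Fin N → Fin k → Fin v)
    (cols : Fin i → Fin k) (f : Fin i → Fin v) : ℕ :=
  (Finset.univ.filter fun r => ∀ j : Fin i, A r (cols j) = f j).card

/-- `A` is an `(α, β)`-balanced covering array: it is a covering array of strength `t`, and
for each `1 ≤ i ≤ t` (encoded as `i : Fin t`, tuple length `i+1`), in every `N × (i+1)`
subarray every `(i+1)`-tuple occurs at least `α i` and at most `β i` times. -/
def BalancedCA (N t k v : ℕ) (α β : Fin t → ℕ)
    (A : Fin N → Fin k → Fin v) : Prop :=
  IsCA (Fin N) t k v A ∧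
  ∀ i : Fin t, ∀ cols : Fin (i.1 + 1) → Fin k, Function.Injective cols →
    ∀ f : Fin (i.1 + 1) → Fin v,
      α i ≤ tupleCount A cols f ∧ tupleCount A cols f ≤ β i

/-- For a covering array `CA(N; t, k, v)` with `t ≥ 2`, `k ≥ t` and a fixed symbol `σ`, the
subarray consisting of the first `k-1` columns of the rows ending in `σ` is a covering array
of strength `t-1` on `k-1` columns, and it has at most `N - (v-1) * CAN(t-1, k-1, v)` rows. -/
lemma aux1 (N t k v : ℕ) (ht : 2 ≤ t) (hk : t ≤ k)
    (A : Fin N → Fin k → Fin v) (hA : IsCA (Fin N) t k v A) (σ : Fin v)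
    (hlast : k - 1 < k) :
    IsCA {r : Fin N // A r ⟨k - 1, hlast⟩ = σ} (t - 1) (k - 1) v
        (fun r j => A r.1 (Fin.castLE (Nat.sub_le k 1) j)) := by
  intro cols hcols f
  set cols' : Fin t → Fin k := fun i =>
    if h : i.1 < t - 1 then Fin.castLE (Nat.sub_le k 1) (cols ⟨i.1, h⟩) else ⟨k - 1, hlast⟩
    with hcols'
  set f' : Fin t → Fin v := fun i => if h : i.1 < t - 1 then f ⟨i.1, h⟩ else σ with hf'
  have hinj : Function.Injective cols' := by
    intro i j hij
    simp only [hcols'] at hij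
    by_cases hi : i.1 < t - 1 <;> by_cases hj : j.1 < t - 1
    · simp only [dif_pos hi, dif_pos hj] at hij
      have := hcols (Fin.castLE_injective _ hij)
      have := congrArg Fin.val this
      exact Fin.ext this
    · simp only [dif_pos hi, dif_neg hj] at hij
      have h2 : ((cols ⟨i.1, hi⟩) : ℕ) = k - 1 := by simpa using congrArg Fin.val hij
      have := (cols ⟨i.1, hi⟩).isLt
      omega
    · simp only [dif_neg hi, dif_pos hj] at hij
      have h2 : ((cols ⟨j.1, hj⟩) : ℕ) = k - 1 := by simpa using (congrArg Fin.val hij).symm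
      have := (cols ⟨j.1, hj⟩).isLt
      omega
    · have hi' := i.isLt; have hj' := j.isLt
      exact Fin.ext (by omega)
  obtain ⟨r, hr⟩ := hA cols' hinj f'
  have hlastr : A r ⟨k - 1, hlast⟩ = σ := by
    have := hr ⟨t - 1, by omega⟩
    simp only [hcols', hf', dif_neg (lt_irrefl (t - 1))] at this
    exact this
  refine ⟨⟨r, hlastr⟩, fun i => ?_⟩
  have hi : i.1 < t - 1 := i.isLt
  have := hr ⟨i.1, by omega⟩
  simp only [hcols', hf', dif_pos hi] at this
  simpa using this

lemma aux2 (N t k v : ℕ) (ht : 2 ≤ t) (hk : t ≤ k)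
    (A : Fin N → Fin k → Fin v) (hA : IsCA (Fin N) t k v A) (σ : Fin v)
    (hlast : k - 1 < k) :
    CAN (t - 1) (k - 1) v ≤ (Finset.univ.filter fun r : Fin N => A r ⟨k - 1, hlast⟩ = σ).card := by
  have h1 := aux1 N t k v ht hk A hA σ hlast
  have hcard : (Finset.univ.filter fun r : Fin N => A r ⟨k - 1, hlast⟩ = σ).card
      = Fintype.card {r : Fin N // A r ⟨k - 1, hlast⟩ = σ} := by
    rw [Fintype.card_subtype]
  set m := (Finset.univ.filter fun r : Fin N => A r ⟨k - 1, hlast⟩ = σ).card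
  have e : Fin m ≃ {r : Fin N // A r ⟨k - 1, hlast⟩ = σ} :=
    (Fintype.equivFinOfCardEq hcard.symm).symm
  apply Nat.sInf_le
  refine ⟨fun i j => A (e i).1 (Fin.castLE (Nat.sub_le k 1) j), ?_⟩
  intro cols hc f
  obtain ⟨r, hr⟩ := h1 cols hc f
  exact ⟨e.symm r, by simpa [e.apply_symm_apply] using hr⟩

/-- For a covering array `CA(N; t, k, v)` ... -/
theorem stmt8 (N t k v : ℕ) (ht : 2 ≤ t) (hk : t ≤ k)
    (A : Fin N → Fin k → Fin v) (hA : IsCA (Fin N) t k v A) (s : Fin v) :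
    IsCA {r : Fin N // A r ⟨k - 1, by omega⟩ = s} (t - 1) (k - 1) v
        (fun r j => A r.1 (Fin.castLE (Nat.sub_le k 1) j)) ∧
      (Finset.univ.filter fun r : Fin N => A r ⟨k - 1, by omega⟩ = s).card ≤
        N - (v - 1) * CAN (t - 1) (k - 1) v := by
  have hlast : k - 1 < k := by omega
  refine ⟨aux1 N t k v ht hk A hA s hlast, ?_⟩
  have hsum : ∑ σ' : Fin v,
      (Finset.univ.filter fun r : Fin N => A r ⟨k - 1, hlast⟩ = σ').card = N := by
    rw [← Finset.card_eq_sum_card_fiberwise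
      (f := fun r : Fin N => A r ⟨k - 1, hlast⟩) (fun x _ => Finset.mem_univ _)]
    simp
  have hlow : ∀ σ' : Fin v, CAN (t - 1) (k - 1) v ≤
      (Finset.univ.filter fun r : Fin N => A r ⟨k - 1, hlast⟩ = σ').card :=
    fun σ' => aux2 N t k v ht hk A hA σ' hlast
  have key : (v - 1) * CAN (t - 1) (k - 1) v +
      (Finset.univ.filter fun r : Fin N => A r ⟨k - 1, hlast⟩ = s).card ≤
      ∑ σ' : Fin v, (Finset.univ.filter fun r : Fin N => A r ⟨k - 1, hlast⟩ = σ').card := by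
    rw [← Finset.sum_erase_add _ _ (Finset.mem_univ s)]
    refine Nat.add_le_add ?_ le_rfl
    calc (v - 1) * CAN (t - 1) (k - 1) v
        = (Finset.univ.erase s).card * CAN (t - 1) (k - 1) v := by
          rw [Finset.card_erase_of_mem (Finset.mem_univ s)]; simp
      _ ≤ ∑ σ' ∈ Finset.univ.erase s,
            (Finset.univ.filter fun r : Fin N => A r ⟨k - 1, hlast⟩ = σ').card := by
          simpa using Finset.card_nsmul_le_sum (Finset.univ.erase s) _ _ (fun x _ => hlow x)
  omega
end

section
/- Any CA(17;3,k,2) with k ≥ 17 is automatically ((8,2,1),(9,7,6))-balanced: assuming each pair of columns covers each binary pair at least 2 times and each single column covers each symbol at least CAN(2,16,2) = 8 times (which follows since deleting a column and restricting to rows with a fixed symbol yields a strength-2 CA on ≥16 columns), the upper bounds 9, 7, 6 on occurrences of 1-, 2-, 3-tuples follow from N = 17 and the counting inequalities β_1 ≤ N - (v-1)α_1, β_2 ≤ β_1 - (v-1)α_2, β_3 ≤ β_2 - (v-1)α_3. -/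
open Finset Function

/- ---------- auxiliary lemmas ---------- -/

lemma fin2_ne (x a : Fin 2) : ¬ x = a ↔ x = 1 - a := by revert x a; decide

lemma split_cnt {N : ℕ} (P : Fin N → Prop) [DecidablePred P] (g : Fin N → Fin 2) (d : Fin 2) :
    ((univ.filter fun r => P r ∧ g r = d).card
      + (univ.filter fun r => P r ∧ g r = 1 - d).card)
      = (univ.filter P).card := by
  have h1 : (univ.filter fun r => P r ∧ g r = d) = (univ.filter P).filter (fun r => g r = d) := by
    rw [Finset.filter_filter]
  have h2 : (univ.filter fun r => P r ∧ g r = 1 - d)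
      = (univ.filter P).filter (fun r => ¬ g r = d) := by
    rw [Finset.filter_filter]
    exact filter_congr (by intro r _; simp [fin2_ne])
  rw [h1, h2]
  exact Finset.card_filter_add_card_filter_not _

lemma lower3 {k : ℕ} (A : Fin 17 → Fin k → Fin 2) (hA : IsCA (Fin 17) 3 k 2 A)
    (c1 c2 c3 : Fin k) (h12 : c1 ≠ c2) (h13 : c1 ≠ c3) (h23 : c2 ≠ c3)
    (a b d : Fin 2) :
    1 ≤ (univ.filter fun r => (A r c1 = a ∧ A r c2 = b) ∧ A r c3 = d).card := by
  obtain ⟨r, hr⟩ := hA ![c1, c2, c3]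
    (by intro x y hxy; fin_cases x <;> fin_cases y <;> simp_all) ![a, b, d]
  refine Finset.card_pos.mpr ⟨r, ?_⟩
  simp only [mem_filter, mem_univ, true_and]
  exact ⟨⟨by simpa using hr 0, by simpa using hr 1⟩, by simpa using hr 2⟩

lemma exists_third {k : ℕ} (hk : 17 ≤ k) (x y : Fin k) : ∃ z : Fin k, z ≠ x ∧ z ≠ y := by
  by_contra h
  push_neg at h
  have h' : ∀ z : Fin k, z = x ∨ z = y := by
    intro z
    by_contra hz
    push_neg at hz
    exact absurd (h z hz.1) hz.2
  have h0 := h' ⟨0, by omega⟩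
  have h1 := h' ⟨1, by omega⟩
  have h2 := h' ⟨2, by omega⟩
  rcases h0 with h0 | h0 <;> rcases h1 with h1 | h1 <;> rcases h2 with h2 | h2 <;>
    simp only [Fin.ext_iff] at h0 h1 h2 <;> omega

lemma lower1 {k : ℕ} (hk : 17 ≤ k) (hCAN : CAN 2 16 2 = 8)
    (A : Fin 17 → Fin k → Fin 2) (hA : IsCA (Fin 17) 3 k 2 A)
    (c : Fin k) (a : Fin 2) :
    8 ≤ (univ.filter fun r => A r c = a).card := by
  set s := univ.filter fun r : Fin 17 => A r c = a with hs
  let e := s.orderIsoOfFin rfl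
  let g : Fin 16 → Fin k := fun j =>
    if h : (j : ℕ) < (c : ℕ) then ⟨j, lt_trans h c.isLt⟩ else ⟨(j : ℕ) + 1, by omega⟩
  have hgc : ∀ j, g j ≠ c := by
    intro j
    simp only [g]
    split_ifs with h <;> simp only [ne_eq, Fin.ext_iff] <;> omega
  have hginj : Function.Injective g := by
    intro x y hxy
    simp only [g] at hxy
    split_ifs at hxy <;> simp only [Fin.ext_iff] at hxy ⊢ <;> omega
  have hB : IsCA (Fin s.card) 2 16 2 (fun r j => A (e r) (g j)) := by
    intro cols hinj f
    have h01 : cols 0 ≠ cols 1 := fun h => absurd (hinj h) (by decide)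
    have hne : g (cols 0) ≠ g (cols 1) := fun h => h01 (hginj h)
    obtain ⟨r, hr⟩ := hA ![g (cols 0), g (cols 1), c]
      (by
        intro x y hxy
        fin_cases x <;> fin_cases y <;>
          simp only [Matrix.cons_val_zero, Matrix.cons_val_one, Matrix.head_cons,
            Matrix.cons_val_two, Matrix.tail_cons, Fin.isValue] at hxy <;>
          first
            | rfl
            | exact absurd hxy hne
            | exact absurd hxy.symm hne
            | exact absurd hxy (hgc _)
            | exact absurd hxy.symm (hgc _))
      ![f 0, f 1, a]
    have hrs : r ∈ s := by
      rw [hs, mem_filter]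
      exact ⟨mem_univ r, by simpa using hr 2⟩
    refine ⟨e.symm ⟨r, hrs⟩, ?_⟩
    intro i
    have he : ((e (e.symm ⟨r, hrs⟩)) : Fin 17) = r := by simp
    fin_cases i <;> simp only [he] <;> [skip; skip]
    · simpa using hr 0
    · simpa using hr 1
  have hle : CAN 2 16 2 ≤ s.card := Nat.sInf_le ⟨_, hB⟩
  omega

/-- Given `CAN(2, 16, 2) = 8`, every covering array `CA(17; 3, k, 2)` with `k ≥ 17` is
automatically `((8,2,1),(9,7,6))`-balanced. -/
theorem stmt14 (k : ℕ) (hk : 17 ≤ k) (hCAN : CAN 2 16 2 = 8)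
    (A : Fin 17 → Fin k → Fin 2) (hA : IsCA (Fin 17) 3 k 2 A) :
    BalancedCA 17 3 k 2 ![8, 2, 1] ![9, 7, 6] A := by
  have hsum17 : ∀ (c : Fin k) (a : Fin 2),
      (univ.filter fun r => A r c = a).card + (univ.filter fun r => A r c = 1 - a).card = 17 := by
    intro c a
    have h := split_cnt (fun _ : Fin 17 => True) (fun r => A r c) a
    simpa using h
  have hup1 : ∀ (c : Fin k) (a : Fin 2), (univ.filter fun r => A r c = a).card ≤ 9 := by
    intro c a
    have h1 := lower1 hk hCAN A hA c (1 - a)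
    have h2 := hsum17 c a
    omega
  have hlow2 : ∀ (c1 c2 : Fin k), c1 ≠ c2 → ∀ a b : Fin 2,
      2 ≤ (univ.filter fun r => A r c1 = a ∧ A r c2 = b).card := by
    intro c1 c2 h12 a b
    obtain ⟨c3, h31, h32⟩ := exists_third hk c1 c2
    have hs := split_cnt (fun r => A r c1 = a ∧ A r c2 = b) (fun r => A r c3) 0
    have l0 := lower3 A hA c1 c2 c3 h12 (Ne.symm h31) (Ne.symm h32) a b 0
    have l1 := lower3 A hA c1 c2 c3 h12 (Ne.symm h31) (Ne.symm h32) a b (1 - 0)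
    omega
  have hup2 : ∀ (c1 c2 : Fin k), c1 ≠ c2 → ∀ a b : Fin 2,
      (univ.filter fun r => A r c1 = a ∧ A r c2 = b).card ≤ 7 := by
    intro c1 c2 h12 a b
    have hs := split_cnt (fun r => A r c1 = a) (fun r => A r c2) b
    have h9 := hup1 c1 a
    have h2 := hlow2 c1 c2 h12 a (1 - b)
    omega
  have hup3 : ∀ (c1 c2 c3 : Fin k), c1 ≠ c2 → c1 ≠ c3 → c2 ≠ c3 → ∀ a b d : Fin 2,
      (univ.filter fun r => (A r c1 = a ∧ A r c2 = b) ∧ A r c3 = d).card ≤ 6 := by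
    intro c1 c2 c3 h12 h13 h23 a b d
    have hs := split_cnt (fun r => A r c1 = a ∧ A r c2 = b) (fun r => A r c3) d
    have h7 := hup2 c1 c2 h12 a b
    have h1 := lower3 A hA c1 c2 c3 h12 h13 h23 a b (1 - d)
    omega
  refine ⟨hA, ?_⟩
  intro i cols hinj f
  fin_cases i
  · -- length-1 tuples
    have hT : tupleCount A cols f = (univ.filter fun r => A r (cols 0) = f 0).card := by
      unfold tupleCount
      apply congrArg
      apply filter_congr
      intro r _
      constructor
      · intro h; exact h 0
      · intro h j; fin_cases j; exact h
    simp only [hT, Matrix.cons_val_zero, Fin.isValue]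
    exact ⟨lower1 hk hCAN A hA _ _, hup1 _ _⟩
  · -- length-2 tuples
    have h01 : cols 0 ≠ cols 1 := fun h => absurd (hinj h) (by decide)
    have hT : tupleCount A cols f
        = (univ.filter fun r => A r (cols 0) = f 0 ∧ A r (cols 1) = f 1).card := by
      unfold tupleCount
      apply congrArg
      apply filter_congr
      intro r _
      constructor
      · intro h; exact ⟨h 0, h 1⟩
      · intro h j; fin_cases j; exacts [h.1, h.2]
    simp only [hT, Matrix.cons_val_one, Matrix.head_cons, Fin.isValue]
    exact ⟨hlow2 _ _ h01 _ _, hup2 _ _ h01 _ _⟩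
  · -- length-3 tuples
    have h01 : cols 0 ≠ cols 1 := fun h => absurd (hinj h) (by decide)
    have h02 : cols 0 ≠ cols 2 := fun h => absurd (hinj h) (by decide)
    have h12 : cols 1 ≠ cols 2 := fun h => absurd (hinj h) (by decide)
    have hT : tupleCount A cols f
        = (univ.filter fun r =>
            (A r (cols 0) = f 0 ∧ A r (cols 1) = f 1) ∧ A r (cols 2) = f 2).card := by
      unfold tupleCount
      apply congrArg
      apply filter_congr
      intro r _
      constructor
      · intro h; exact ⟨⟨h 0, h 1⟩, h 2⟩
      · intro h j; fin_cases j; exacts [h.1.1, h.1.2, h.2]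
    simp only [hT, Matrix.cons_val_two, Matrix.tail_cons, Matrix.head_cons, Fin.isValue]
    refine ⟨lower3 A hA _ _ _ h01 h02 h12 _ _ _, hup3 _ _ _ h01 h02 h12 _ _ _⟩
end
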